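/- For any infinite set X, the group FAlt(X) is simple: every normal subgroup of FAlt(X) is either trivial or equal to FAlt(X). -/

import Mathlib

/-!
`FAlt X` is the directed union, over finite `T ⊆ X`, of the subgroups generated by the 3-cycles
supported in `T`, and each of these is the alternating group of `T` transported along
`Equiv.Perm.ofSubtype`. Given a normal subgroup `N` containing some `g ≠ 1` and any `u ∈ FAlt X`,
choose `T` with at least five points such that `g` and `u` both come from `Alt(T)`. Since `Alt(T)`
is simple and meets `N` nontrivially, it lies in `N`, hence so does `u`.
-/

open Equiv Equiv.Perm Subgroup Finset

/-- `FAlt X`: the subgroup of `Equiv.Perm X` generated by all 3-cycles, i.e. by those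
permutations whose support has exactly 3 elements. -/
def FAlt (X : Type*) : Subgroup (Equiv.Perm X) :=
  Subgroup.closure {σ : Equiv.Perm X | {x | σ x ≠ x}.ncard = 3}

theorem MonoidHom.range_le_of_map_mem_of_map_ne_one {G H : Type*} [Group G] [Group H]
    [IsSimpleGroup H] (φ : H →* G) {N : Subgroup G} [N.Normal] {h : H} (hN : φ h ∈ N)
    (h1 : φ h ≠ 1) : φ.range ≤ N := by
  rcases (N.normal_comap φ).eq_bot_or_eq_top with hbot | htop
  · have : h ∈ N.comap φ := hN
    rw [hbot, mem_bot] at this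
    exact absurd (by rw [this, map_one]) h1
  · rw [range_eq_map, map_le_iff_le_comap, htop]

section

variable {X : Type*}

theorem Equiv.Perm.apply_mem_iff_of_setOf_ne_subset {σ : Perm X} {s : Set X}
    (h : {x | σ x ≠ x} ⊆ s) (x : X) : σ x ∈ s ↔ x ∈ s := by
  by_cases hx : σ x = x
  · rw [hx]
  · exact iff_of_true (h fun hσx => hx (σ.injective hσx)) (h hx)

theorem Equiv.Perm.setOf_ofSubtype_apply_ne {p : X → Prop} [DecidablePred p]
    (ε : Perm (Subtype p)) : {x | ofSubtype ε x ≠ x} = Subtype.val '' {y | ε y ≠ y} := by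
  ext x
  by_cases hx : p x
  · simp [ofSubtype_apply_of_mem ε hx, hx, Subtype.ext_iff]
  · simp [ofSubtype_apply_of_not_mem ε hx, hx]

theorem Equiv.Perm.ncard_setOf_ofSubtype_apply_ne [DecidableEq X] {T : Finset X} (ε : Perm T) :
    {x | ofSubtype ε x ≠ x}.ncard = #ε.support := by
  rw [setOf_ofSubtype_apply_ne, Set.ncard_image_of_injective _ Subtype.val_injective,
    ← coe_support_eq_set_support, Set.ncard_coe_finset]

def FAltOn (s : Set X) : Subgroup (Perm X) :=
  closure {σ : Perm X | {x | σ x ≠ x}.ncard = 3 ∧ {x | σ x ≠ x} ⊆ s}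

theorem fAltOn_mono : Monotone (FAltOn (X := X)) := fun _ _ hst =>
  closure_mono fun _ hσ => ⟨hσ.1, hσ.2.trans hst⟩

theorem fAltOn_le_fAlt (s : Set X) : FAltOn s ≤ FAlt X :=
  closure_mono fun _ hσ => hσ.1

theorem iSup_fAltOn_finset : ⨆ T : Finset X, FAltOn (T : Set X) = FAlt X := by
  simp only [FAlt, FAltOn, ← Subgroup.closure_iUnion]
  congr 1
  ext σ
  simp only [Set.mem_iUnion, Set.mem_ofPred_eq]
  refine ⟨fun ⟨_, h, _⟩ => h, fun h => ?_⟩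
  have hfin : {x | σ x ≠ x}.Finite := Set.finite_of_ncard_ne_zero (by rw [h]; simp)
  exact ⟨hfin.toFinset, h, by simp⟩

theorem exists_finset_mem_fAltOn {σ : Perm X} (hσ : σ ∈ FAlt X) :
    ∃ T : Finset X, σ ∈ FAltOn (T : Set X) := by
  rw [← iSup_fAltOn_finset] at hσ
  exact (mem_iSup_of_directed (fAltOn_mono.comp fun _ _ => coe_subset.2).directed_le).1 hσ

theorem exists_five_le_card_mem_fAltOn [Infinite X] {σ τ : Perm X} (hσ : σ ∈ FAlt X)
    (hτ : τ ∈ FAlt X) :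
    ∃ T : Finset X, 5 ≤ #T ∧ σ ∈ FAltOn (T : Set X) ∧ τ ∈ FAltOn (T : Set X) := by
  classical
  obtain ⟨Tσ, hTσ⟩ := exists_finset_mem_fAltOn hσ
  obtain ⟨Tτ, hTτ⟩ := exists_finset_mem_fAltOn hτ
  obtain ⟨T, hsub, hcard⟩ := Infinite.exists_superset_card_eq (Tσ ∪ Tτ) (#(Tσ ∪ Tτ) + 5) (by omega)
  exact ⟨T, by omega, fAltOn_mono (coe_subset.2 (union_subset_left hsub)) hTσ,
    fAltOn_mono (coe_subset.2 (union_subset_right hsub)) hTτ⟩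

theorem alternatingGroup_map_ofSubtype [DecidableEq X] (T : Finset X) :
    (alternatingGroup T).map ofSubtype = FAltOn (T : Set X) := by
  rw [← closure_three_cycles_eq_alternating, MonoidHom.map_closure, FAltOn]
  congr 1
  ext σ
  constructor
  · rintro ⟨ε, hε, rfl⟩
    refine ⟨by rw [ncard_setOf_ofSubtype_apply_ne, hε.card_support], ?_⟩
    rw [setOf_ofSubtype_apply_ne]
    rintro _ ⟨y, -, rfl⟩
    exact y.2
  · rintro ⟨hσ3, hσT⟩
    have hσ := ofSubtype_subtypePerm (apply_mem_iff_of_setOf_ne_subset hσT) fun x hx => hσT hx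
    refine ⟨_, card_support_eq_three_iff.1 ?_, hσ⟩
    rw [← ncard_setOf_ofSubtype_apply_ne, hσ, hσ3]

theorem isSimpleGroup_fAltOn {T : Finset X} (hT : 5 ≤ #T) :
    IsSimpleGroup (FAltOn (T : Set X)) := by
  classical
  have := alternatingGroup.isSimpleGroup (α := T) (by simpa using hT)
  exact (((alternatingGroup T).equivMapOfInjective _ ofSubtype_injective).trans
    (MulEquiv.subgroupCongr (alternatingGroup_map_ofSubtype T))).symm.isSimpleGroup

end

/-- For any infinite set `X`, the group `FAlt X` is simple. -/
theorem fAlt_isSimpleGroup {X : Type*} [Infinite X] : IsSimpleGroup ↥(FAlt X) := by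
  obtain ⟨T, hT, -⟩ := exists_five_le_card_mem_fAltOn (one_mem (FAlt X)) (one_mem (FAlt X))
  have := isSimpleGroup_fAltOn hT
  have : Nontrivial (FAlt X) := (inclusion_injective (fAltOn_le_fAlt (T : Set X))).nontrivial
  refine ⟨fun N _ => or_iff_not_imp_left.2 fun hN => eq_top_iff.2 fun u _ => ?_⟩
  obtain ⟨g, hgN, hg⟩ := N.bot_or_exists_ne_one.resolve_left hN
  obtain ⟨T, hT, hgT, huT⟩ := exists_five_le_card_mem_fAltOn g.2 u.2
  have := isSimpleGroup_fAltOn hT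
  exact (inclusion (fAltOn_le_fAlt (T : Set X))).range_le_of_map_mem_of_map_ne_one
    (h := ⟨g, hgT⟩) hgN hg ⟨⟨u, huT⟩, rfl⟩
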